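/- Let ξ₁, ξ₂ be square-integrable random elements of a separable Hilbert space H that are conditionally independent given a random element X. Then E[⟨ξ₁, ξ₂⟩_H | X] = ⟨E[ξ₁ | X], E[ξ₂ | X]⟩_H almost surely. -/

import Mathlib

open MeasureTheory ProbabilityTheory Filter
open scoped ENNReal NNReal RealInnerProductSpace Topology

lemma my_countable_generatePiSystem {α : Type*} {S : Set (Set α)} (hS : S.Countable) :
    (generatePiSystem S).Countable := by
  have hsub : generatePiSystem S ⊆ (fun T => ⋂₀ T) '' {T | T.Finite ∧ T ⊆ S} := by
    intro t ht
    induction ht with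
    | base h =>
        exact ⟨{_}, ⟨Set.finite_singleton _, Set.singleton_subset_iff.2 h⟩,
          Set.sInter_singleton _⟩
    | inter hs ht hne ihs iht =>
        obtain ⟨T₁, ⟨hT₁f, hT₁s⟩, h₁⟩ := ihs
        obtain ⟨T₂, ⟨hT₂f, hT₂s⟩, h₂⟩ := iht
        refine ⟨T₁ ∪ T₂, ⟨hT₁f.union hT₂f, Set.union_subset hT₁s hT₂s⟩, ?_⟩
        simp only at h₁ h₂ ⊢
        rw [Set.sInter_union, h₁, h₂]
  exact (((Set.countable_setOf_finite_subset hS).image _)).mono hsub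

lemma my_ae_eq_condexpKernel {Ω β : Type*} {m : MeasurableSpace Ω} [mΩ : MeasurableSpace Ω]
    [StandardBorelSpace Ω] (hm : m ≤ mΩ) (P : Measure Ω) [IsFiniteMeasure P]
    {f f' : Ω → β} (h : f =ᵐ[P] f') :
    ∀ᵐ ω ∂(P.trim hm), f =ᵐ[condExpKernel P m ω] f' := by
  have hnull : P {x | f x ≠ f' x} = 0 := ae_iff.mp h
  obtain ⟨N, hNsub, hNm, hNP⟩ := exists_measurable_superset_of_null hnull
  have h1 : (fun ω => (condExpKernel P m ω N).toReal) =ᵐ[P.trim hm] P⟦N|m⟧ :=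
    condExpKernel_ae_eq_trim_condExp hm hNm
  have h2 : P⟦N|m⟧ =ᵐ[P] 0 := by
    have hind : (N.indicator (fun _ => (1:ℝ))) =ᵐ[P] 0 := by
      filter_upwards [measure_eq_zero_iff_ae_notMem.mp hNP] with x hx
      simp [Set.indicator_of_notMem hx]
    exact (condExp_congr_ae hind).trans (by rw [condExp_zero])
  have h2' : P⟦N|m⟧ =ᵐ[P.trim hm] 0 :=
    (StronglyMeasurable.ae_eq_trim_iff hm stronglyMeasurable_condExp stronglyMeasurable_zero).mpr h2
  filter_upwards [h1, h2'] with ω hω1 hω2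
  have hN0 : condExpKernel P m ω N = 0 := by
    have htr : (condExpKernel P m ω N).toReal = 0 := by
      rw [hω1, hω2]; rfl
    exact ((ENNReal.toReal_eq_zero_iff _).mp htr).resolve_right (measure_ne_top _ _)
  rw [Filter.EventuallyEq, ae_iff]
  exact measure_mono_null hNsub hN0

lemma my_ae_indepFun {Ω β γ : Type*} {m : MeasurableSpace Ω} [mΩ : MeasurableSpace Ω]
    [StandardBorelSpace Ω]
    [mβ : MeasurableSpace β] [MeasurableSpace.CountablyGenerated β]
    [mγ : MeasurableSpace γ] [MeasurableSpace.CountablyGenerated γ]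
    (hm : m ≤ mΩ) (P : Measure Ω) [IsProbabilityMeasure P]
    {f : Ω → β} {g : Ω → γ} (hf : Measurable f) (hg : Measurable g)
    (hci : Kernel.IndepFun f g (condExpKernel P m) (P.trim hm)) :
    ∀ᵐ ω ∂(P.trim hm), IndepFun f g (condExpKernel P m ω) := by
  set Sβ := generatePiSystem (MeasurableSpace.countableGeneratingSet β) with hSβ
  set Sγ := generatePiSystem (MeasurableSpace.countableGeneratingSet γ) with hSγ
  have hSβc : Sβ.Countable :=
    my_countable_generatePiSystem MeasurableSpace.countable_countableGeneratingSet
  have hSγc : Sγ.Countable :=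
    my_countable_generatePiSystem MeasurableSpace.countable_countableGeneratingSet
  have hSβm : ∀ s ∈ Sβ, MeasurableSet s := fun s hs =>
    generatePiSystem_measurableSet
      (fun t ht => MeasurableSpace.measurableSet_countableGeneratingSet ht) s hs
  have hSγm : ∀ s ∈ Sγ, MeasurableSet s := fun s hs =>
    generatePiSystem_measurableSet
      (fun t ht => MeasurableSpace.measurableSet_countableGeneratingSet ht) s hs
  have key := Kernel.indepFun_iff_measure_inter_preimage_eq_mul.mp hci
  have h : ∀ᵐ ω ∂(P.trim hm), ∀ s ∈ Sβ, ∀ t ∈ Sγ,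
      condExpKernel P m ω (f ⁻¹' s ∩ g ⁻¹' t)
        = condExpKernel P m ω (f ⁻¹' s) * condExpKernel P m ω (g ⁻¹' t) := by
    rw [ae_ball_iff hSβc]
    intro s hs
    rw [ae_ball_iff hSγc]
    intro t ht
    exact key s t (hSβm s hs) (hSγm t ht)
  filter_upwards [h] with ω hω
  rw [IndepFun_iff_Indep]
  have hβgen : mβ = MeasurableSpace.generateFrom Sβ := by
    rw [hSβ, generateFrom_generatePiSystem_eq,
      MeasurableSpace.generateFrom_countableGeneratingSet]
  have hγgen : mγ = MeasurableSpace.generateFrom Sγ := by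
    rw [hSγ, generateFrom_generatePiSystem_eq,
      MeasurableSpace.generateFrom_countableGeneratingSet]
  refine IndepSets.indep (p1 := Set.preimage f '' Sβ) (p2 := Set.preimage g '' Sγ)
    (hf.comap_le) (hg.comap_le)
    ((isPiSystem_generatePiSystem _).comap f) ((isPiSystem_generatePiSystem _).comap g)
    ?_ ?_ ?_
  · rw [hβgen, MeasurableSpace.comap_generateFrom]
  · rw [hγgen, MeasurableSpace.comap_generateFrom]
  · rintro t₁ t₂ ⟨s, hs, rfl⟩ ⟨t, ht, rfl⟩
    simp only [ae_dirac_eq, Filter.eventually_pure, Kernel.const_apply]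
    exact hω s hs t ht

lemma my_integral_inner_indep {Ω : Type*} [mΩ : MeasurableSpace Ω]
    {H : Type*} [NormedAddCommGroup H] [InnerProductSpace ℝ H] [CompleteSpace H]
    [SecondCountableTopology H] [MeasurableSpace H] [BorelSpace H]
    (ν : Measure Ω) [IsFiniteMeasure ν] {f g : Ω → H}
    (hf : Measurable f) (hg : Measurable g)
    (hfi : Integrable f ν) (hgi : Integrable g ν)
    (hint : Integrable (fun ω => ⟪f ω, g ω⟫) ν)
    (h : IndepFun f g ν) :
    ∫ ω, ⟪f ω, g ω⟫ ∂ν = ⟪∫ ω, f ω ∂ν, ∫ ω, g ω ∂ν⟫ := by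
  have hmap := (indepFun_iff_map_prod_eq_prod_map_map hf.aemeasurable hg.aemeasurable).mp h
  have hpair : AEMeasurable (fun ω => (f ω, g ω)) ν := (hf.prodMk hg).aemeasurable
  have hinner_cont : Continuous (fun p : H × H => ⟪p.1, p.2⟫) := continuous_inner
  have h1 : ∫ ω, ⟪f ω, g ω⟫ ∂ν = ∫ p : H × H, ⟪p.1, p.2⟫ ∂(ν.map (fun ω => (f ω, g ω))) := by
    rw [integral_map hpair hinner_cont.aestronglyMeasurable]
  have hint' : Integrable (fun p : H × H => ⟪p.1, p.2⟫) ((ν.map f).prod (ν.map g)) := by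
    rw [← hmap, integrable_map_measure hinner_cont.aestronglyMeasurable hpair]
    exact hint
  have hgid : Integrable (fun y : H => y) (ν.map g) :=
    (integrable_map_measure aestronglyMeasurable_id hg.aemeasurable).mpr hgi
  have hfid : Integrable (fun x : H => x) (ν.map f) :=
    (integrable_map_measure aestronglyMeasurable_id hf.aemeasurable).mpr hfi
  rw [h1, hmap, MeasureTheory.integral_prod _ hint']
  have h2 : ∀ x : H, ∫ y, ⟪x, y⟫ ∂(ν.map g) = ⟪x, ∫ y, y ∂(ν.map g)⟫ := fun x =>
    integral_inner hgid x
  simp_rw [h2]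
  have h3 : ∫ x, ⟪x, ∫ y, y ∂(ν.map g)⟫ ∂(ν.map f)
      = ⟪∫ x, x ∂(ν.map f), ∫ y, y ∂(ν.map g)⟫ := by
    have hc : (fun x : H => (⟪x, ∫ y, y ∂(ν.map g)⟫ : ℝ))
        = fun x => ⟪∫ y, y ∂(ν.map g), x⟫ := funext fun x => real_inner_comm _ _
    rw [hc, integral_inner hfid, real_inner_comm]
  have h4 : ∫ x : H, x ∂(ν.map f) = ∫ ω, f ω ∂ν :=
    integral_map hf.aemeasurable aestronglyMeasurable_id
  have h5 : ∫ y : H, y ∂(ν.map g) = ∫ ω, g ω ∂ν :=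
    integral_map hg.aemeasurable aestronglyMeasurable_id
  rw [h3, h4, h5]

/-- If `ξ₁, ξ₂` are square-integrable `H`-valued random elements that are conditionally
independent given a random element `X`, then
`E[⟨ξ₁, ξ₂⟩ | X] = ⟨E[ξ₁ | X], E[ξ₂ | X]⟩` a.s. -/
theorem stmt17 {Ω : Type*} [mΩ : MeasurableSpace Ω] [StandardBorelSpace Ω] [Nonempty Ω]
    (P : Measure Ω) [IsProbabilityMeasure P]
    {H : Type*} [NormedAddCommGroup H] [InnerProductSpace ℝ H] [CompleteSpace H]
    [SecondCountableTopology H] [mH : MeasurableSpace H] [BorelSpace H]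
    {E : Type*} [mE : MeasurableSpace E]
    (X : Ω → E) (hX : Measurable X)
    (ξ₁ ξ₂ : Ω → H) (h₁ : MemLp ξ₁ 2 P) (h₂ : MemLp ξ₂ 2 P)
    (hci : CondIndepFun (MeasurableSpace.comap X mE) (hX.comap_le) ξ₁ ξ₂ P) :
    P[(fun ω => ⟪ξ₁ ω, ξ₂ ω⟫)|MeasurableSpace.comap X mE] =ᵐ[P]
      fun ω => ⟪(P[ξ₁|MeasurableSpace.comap X mE]) ω,
        (P[ξ₂|MeasurableSpace.comap X mE]) ω⟫ := by
  have hm : (MeasurableSpace.comap X mE) ≤ mΩ := hX.comap_le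
  obtain ⟨ξ₁', hsm₁, hae₁⟩ := h₁.aestronglyMeasurable
  obtain ⟨ξ₂', hsm₂, hae₂⟩ := h₂.aestronglyMeasurable
  have hmeas₁ : Measurable ξ₁' := hsm₁.measurable
  have hmeas₂ : Measurable ξ₂' := hsm₂.measurable
  have h₁' : MemLp ξ₁' 2 P := h₁.ae_eq hae₁
  have h₂' : MemLp ξ₂' 2 P := h₂.ae_eq hae₂
  have hci0 : Kernel.IndepFun ξ₁ ξ₂ (condExpKernel P (MeasurableSpace.comap X mE)) (P.trim hm) := hci
  have hci' : Kernel.IndepFun ξ₁' ξ₂' (condExpKernel P (MeasurableSpace.comap X mE)) (P.trim hm) :=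
    Kernel.IndepFun.congr' hci0 (my_ae_eq_condexpKernel hm P hae₁)
      (my_ae_eq_condexpKernel hm P hae₂)
  have hindep : ∀ᵐ ω ∂P, IndepFun ξ₁' ξ₂' (condExpKernel P (MeasurableSpace.comap X mE) ω) :=
    ae_of_ae_trim hm (my_ae_indepFun hm P hmeas₁ hmeas₂ hci')
  have hinner_meas : AEStronglyMeasurable (fun ω => (⟪ξ₁' ω, ξ₂' ω⟫ : ℝ)) P :=
    hsm₁.aestronglyMeasurable.inner hsm₂.aestronglyMeasurable
  have hprod : Integrable (fun ω => ‖ξ₁' ω‖ * ‖ξ₂' ω‖) P := by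
    rw [← memLp_one_iff_integrable]
    exact h₂'.norm.smul h₁'.norm
  have hint : Integrable (fun ω => (⟪ξ₁' ω, ξ₂' ω⟫ : ℝ)) P := by
    refine hprod.mono' hinner_meas (Filter.Eventually.of_forall fun ω => ?_)
    simpa using abs_real_inner_le_norm (ξ₁' ω) (ξ₂' ω)
  have hce1 : P[(fun ω => (⟪ξ₁ ω, ξ₂ ω⟫ : ℝ))|(MeasurableSpace.comap X mE)] =ᵐ[P] P[(fun ω => (⟪ξ₁' ω, ξ₂' ω⟫ : ℝ))|(MeasurableSpace.comap X mE)] :=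
    condExp_congr_ae (by filter_upwards [hae₁, hae₂] with ω e1 e2; rw [e1, e2])
  have hce2 : P[ξ₁|(MeasurableSpace.comap X mE)] =ᵐ[P] P[ξ₁'|(MeasurableSpace.comap X mE)] := condExp_congr_ae hae₁
  have hce3 : P[ξ₂|(MeasurableSpace.comap X mE)] =ᵐ[P] P[ξ₂'|(MeasurableSpace.comap X mE)] := condExp_congr_ae hae₂
  have hint1 : Integrable ξ₁' P := h₁'.integrable one_le_two
  have hint2 : Integrable ξ₂' P := h₂'.integrable one_le_two
  have A1 := condExp_ae_eq_integral_condExpKernel hm hint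
  have A2 := condExp_ae_eq_integral_condExpKernel hm hint1
  have A3 := condExp_ae_eq_integral_condExpKernel hm hint2
  have B1 := hint.condExpKernel_ae (m := MeasurableSpace.comap X mE)
  have B2 := hint1.condExpKernel_ae (m := MeasurableSpace.comap X mE)
  have B3 := hint2.condExpKernel_ae (m := MeasurableSpace.comap X mE)
  filter_upwards [hce1, hce2, hce3, A1, A2, A3, B1, B2, B3, hindep] with ω e1 e2 e3 a1 a2 a3
    b1 b2 b3 hind
  rw [e1, e2, e3, a1, a2, a3]
  exact my_integral_inner_indep _ hmeas₁ hmeas₂ b2 b3 b1 hind
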